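/- arXiv:1705.11156 — 2 statements merged into one kernel-verified Lean document; each statement's English description precedes it below -/
import Mathlib

section
/- Let f : ℝ² → ℝ be a non-degenerate weighted homogeneous polynomial of type (d; w₁, w₂), and suppose there exists a point a = (a₁, a₂) with a₂ ≠ 0 and ∂f/∂x₁(a₁, a₂) = 0. Then for every λ < (d − w₂)/w₂ there do NOT exist C > 0 and a neighborhood U of 0 with ‖∇f(x)‖ ≥ C‖x‖^λ for all x ∈ U; consequently the Łojasiewicz exponent satisfies L(f) ≥ d/w₂ − 1. -/
open MvPolynomial

/-- Euclidean norm of the gradient of a polynomial `f` at `x`. -/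
noncomputable def gradNorm {n : ℕ} (f : MvPolynomial (Fin n) ℝ) (x : Fin n → ℝ) : ℝ :=
  Real.sqrt (∑ i, (eval x (pderiv i f)) ^ 2)

/-- Euclidean norm on `Fin n → ℝ`. -/
noncomputable def eNorm {n : ℕ} (x : Fin n → ℝ) : ℝ :=
  Real.sqrt (∑ i, (x i) ^ 2)

/-- `f` is weighted homogeneous of type `(d; w)`: every monomial `x^α` appearing in `f`
satisfies `∑ i, α i * w i = d`. -/
def IsWeightedHomog {n : ℕ} (f : MvPolynomial (Fin n) ℝ) (w : Fin n → ℕ) (d : ℕ) : Prop :=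
  ∀ α ∈ f.support, ∑ i, α i * w i = d

/-- `f` is non-degenerate (isolated singularity at the origin): in some neighborhood of `0`
the gradient of `f` vanishes only at the origin. -/
def Nondeg {n : ℕ} (f : MvPolynomial (Fin n) ℝ) : Prop :=
  ∃ U ∈ nhds (0 : Fin n → ℝ), ∀ x ∈ U, (∀ i, eval x (pderiv i f) = 0) → x = 0

/-- The Łojasiewicz inequality `‖∇f(x)‖ ≥ C ‖x‖^lam` holds near `0` for some `C > 0`. -/
def LojIneq {n : ℕ} (f : MvPolynomial (Fin n) ℝ) (lam : ℝ) : Prop :=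
  ∃ C > (0 : ℝ), ∃ U ∈ nhds (0 : Fin n → ℝ), ∀ x ∈ U, C * eNorm x ^ lam ≤ gradNorm f x

/-- The Łojasiewicz exponent of `f`: the infimum of all `lam > 0` for which the
Łojasiewicz inequality holds near the origin. -/
noncomputable def lojExp {n : ℕ} (f : MvPolynomial (Fin n) ℝ) : ℝ :=
  sInf {lam : ℝ | 0 < lam ∧ LojIneq f lam}

/-- The weighted "radius" `ρ(x) = (∑ i |x i| ^ (2 / w i)) ^ (1/2)`. -/
noncomputable def rho {n : ℕ} (w : Fin n → ℕ) (x : Fin n → ℝ) : ℝ :=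
  Real.sqrt (∑ i, |x i| ^ ((2 : ℝ) / (w i : ℝ)))

/-- The weighted norm of the gradient:
`‖grad_w f(x)‖_w = (∑ i ρ(x)^(2 wᵢ) |∂f/∂xᵢ(x)|²)^(1/2)`. -/
noncomputable def wGradNorm {n : ℕ} (w : Fin n → ℕ) (f : MvPolynomial (Fin n) ℝ)
    (x : Fin n → ℝ) : ℝ :=
  Real.sqrt (∑ i, rho w x ^ (2 * w i) * (eval x (pderiv i f)) ^ 2)

/-!
Along the weighted orbit `γ(t) = (t^{w₁} a₁, t^{w₂} a₂)` of `a`, weighted homogeneity gives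
`∂₁f(γ t) = 0` and `∂₂f(γ t) = t^{d - w₂} ∂₂f(a)`, where `∂₂f(a) ≠ 0` by non-degeneracy, while
`‖γ t‖ ≥ t^{w₂} |a₂|`. Hence `‖∇f(γ t)‖ ≥ C ‖γ t‖^λ` fails as `t → 0⁺` once `w₂ λ < d - w₂`.
For the bound on the exponent the set of admissible exponents must also be nonempty (an empty
infimum is `0`): writing `x = (r^{w₁} u₁, r^{w₂} u₂)` with `r = ρ(x)` and `u` on the compact
weighted sphere `ρ = 1`, where `‖∇f‖ ≥ m > 0`, gives `‖∇f(x)‖ ≥ m r^d ≥ m ‖x‖^d`.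
-/

open Filter Topology Finset

lemma not_eventually_mul_rpow_le_mul_rpow {K M p q : ℝ} (hK : 0 < K) (hpq : p < q) :
    ¬ ∀ᶠ t in 𝓝[>] 0, K * t ^ p ≤ M * t ^ q := by
  intro h
  have hlim : Tendsto (fun t : ℝ => M * t ^ (q - p)) (𝓝[>] 0) (𝓝 0) := by
    have hcont : Continuous fun t : ℝ => M * t ^ (q - p) :=
      continuous_const.mul (Real.continuous_rpow_const (sub_nonneg.2 hpq.le))
    simpa [Real.zero_rpow (sub_pos.2 hpq).ne'] using (hcont.tendsto 0).mono_left nhdsWithin_le_nhds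
  obtain ⟨t, hle, hlt, ht⟩ :=
    (h.and ((hlim.eventually_lt_const hK).and self_mem_nhdsWithin)).exists
  have : K ≤ M * t ^ (q - p) := by
    rwa [Real.rpow_sub ht, ← mul_div_assoc, le_div_iff₀ (Real.rpow_pos_of_pos ht p)]
  linarith

section

variable {n : ℕ} {w : Fin n → ℕ} {d : ℕ} {f : MvPolynomial (Fin n) ℝ}

def weightedScale (w : Fin n → ℕ) (t : ℝ) (x : Fin n → ℝ) : Fin n → ℝ :=
  fun j => t ^ w j * x j

lemma weightedScale_weightedScale (w : Fin n → ℕ) (s t : ℝ) (x : Fin n → ℝ) :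
    weightedScale w s (weightedScale w t x) = weightedScale w (s * t) x := by
  funext j
  simp only [weightedScale, mul_pow, mul_assoc]

lemma weightedScale_one (w : Fin n → ℕ) (x : Fin n → ℝ) : weightedScale w 1 x = x := by
  funext j
  simp [weightedScale]

lemma tendsto_weightedScale_zero (hw : ∀ i, 0 < w i) (x : Fin n → ℝ) :
    Tendsto (fun t => weightedScale w t x) (𝓝 0) (𝓝 0) :=
  tendsto_pi_nhds.2 fun j => by
    simpa [weightedScale, zero_pow (hw j).ne'] using
      ((continuous_pow (w j)).mul continuous_const).tendsto (0 : ℝ) (f := fun t => t ^ w j * x j)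

lemma eval_weightedScale_monomial (w : Fin n → ℕ) (t : ℝ) (x : Fin n → ℝ) (v : Fin n →₀ ℕ)
    (c : ℝ) :
    eval (weightedScale w t x) (monomial v c) = t ^ Finsupp.weight w v * eval x (monomial v c) := by
  rw [eval_monomial, eval_monomial, Finsupp.prod_fintype _ _ (fun _ => pow_zero _),
    Finsupp.prod_fintype _ _ (fun _ => pow_zero _), Finsupp.weight_eq_sum]
  simp only [weightedScale, mul_pow, prod_mul_distrib, ← pow_mul, prod_pow_eq_pow_sum, smul_eq_mul,
    mul_comm (w _)]
  ring

lemma IsWeightedHomog.weight_eq (hf : IsWeightedHomog f w d) {v : Fin n →₀ ℕ}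
    (hv : v ∈ f.support) : Finsupp.weight w v = d := by
  simpa [Finsupp.weight_eq_sum] using hf v hv

lemma pow_mul_eval_weightedScale_pderiv_monomial (w : Fin n → ℕ) (t : ℝ) (x : Fin n → ℝ)
    (i : Fin n) (v : Fin n →₀ ℕ) (c : ℝ) :
    t ^ w i * eval (weightedScale w t x) (pderiv i (monomial v c)) =
      t ^ Finsupp.weight w v * eval x (pderiv i (monomial v c)) := by
  rw [pderiv_monomial]
  rcases Nat.eq_zero_or_pos (v i) with hvi | hvi
  · simp [hvi]
  have hweight : Finsupp.weight w v = w i + Finsupp.weight w (v - Finsupp.single i 1) := by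
    conv_lhs => rw [← tsub_add_cancel_of_le (Finsupp.single_le_iff.2 hvi : Finsupp.single i 1 ≤ v)]
    rw [map_add, Finsupp.weight_single, one_smul, add_comm]
  rw [eval_weightedScale_monomial, ← mul_assoc, ← pow_add, hweight]

lemma IsWeightedHomog.pow_mul_eval_weightedScale_pderiv (hf : IsWeightedHomog f w d) (t : ℝ)
    (x : Fin n → ℝ) (i : Fin n) :
    t ^ w i * eval (weightedScale w t x) (pderiv i f) = t ^ d * eval x (pderiv i f) := by
  conv_lhs => rw [f.as_sum]
  conv_rhs => rw [f.as_sum]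
  simp only [map_sum, mul_sum]
  refine sum_congr rfl fun v hv => ?_
  rw [pow_mul_eval_weightedScale_pderiv_monomial, hf.weight_eq hv]

lemma IsWeightedHomog.le_of_pderiv_ne_zero (hf : IsWeightedHomog f w d) {i : Fin n}
    (h : pderiv i f ≠ 0) : w i ≤ d := by
  obtain ⟨v, hv, hvi⟩ : ∃ v ∈ f.support, v i ≠ 0 := by
    by_contra! hall
    refine h ?_
    rw [f.as_sum, map_sum]
    exact sum_eq_zero fun v hv => by simp [pderiv_monomial, hall v hv]
  calc w i ≤ v i * w i := Nat.le_mul_of_pos_left _ (Nat.pos_of_ne_zero hvi)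
    _ ≤ ∑ j, v j * w j := single_le_sum (f := fun j => v j * w j) (fun _ _ => Nat.zero_le _)
        (mem_univ i)
    _ = d := hf v hv

lemma Nondeg.eq_zero_of_forall_eval_pderiv_eq_zero (hnd : Nondeg f) (hf : IsWeightedHomog f w d)
    (hw : ∀ i, 0 < w i) {x : Fin n → ℝ} (hx : ∀ i, eval x (pderiv i f) = 0) : x = 0 := by
  obtain ⟨U, hU, hU0⟩ := hnd
  obtain ⟨t, htU, ht⟩ := (((tendsto_weightedScale_zero hw x).mono_left nhdsWithin_le_nhds
    |>.eventually_mem hU).and (self_mem_nhdsWithin (s := Set.Ioi (0 : ℝ)))).exists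
  have htw : ∀ j, t ^ w j ≠ 0 := fun j => pow_ne_zero _ (ne_of_gt ht)
  have hscaled : weightedScale w t x = 0 := hU0 _ htU fun i => by
    simpa [hx i, htw i] using hf.pow_mul_eval_weightedScale_pderiv t x i
  funext j
  simpa [weightedScale, htw j] using congrFun hscaled j

lemma abs_le_eNorm (x : Fin n → ℝ) (i : Fin n) : |x i| ≤ eNorm x :=
  Real.abs_le_sqrt (single_le_sum (f := fun j => x j ^ 2) (fun _ _ => sq_nonneg _) (mem_univ i))

lemma eNorm_weightedScale_le (hw : ∀ i, 0 < w i) {t : ℝ} (ht₀ : 0 ≤ t) (ht₁ : t ≤ 1)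
    (x : Fin n → ℝ) : eNorm (weightedScale w t x) ≤ t * eNorm x := by
  have hsum : ∑ j, weightedScale w t x j ^ 2 ≤ t ^ 2 * ∑ j, x j ^ 2 := by
    rw [mul_sum]
    gcongr with j
    rw [weightedScale, mul_pow]
    gcongr
    exact (pow_le_pow_of_le_one ht₀ ht₁ (hw j)).trans_eq (pow_one t)
  calc eNorm (weightedScale w t x) ≤ √(t ^ 2 * ∑ j, x j ^ 2) := Real.sqrt_le_sqrt hsum
    _ = t * eNorm x := by rw [Real.sqrt_mul (sq_nonneg t), Real.sqrt_sq ht₀, eNorm]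

lemma continuous_gradNorm (f : MvPolynomial (Fin n) ℝ) : Continuous (gradNorm f) :=
  Real.continuous_sqrt.comp <| continuous_finsetSum _ fun _ _ => (continuous_eval _).pow 2

lemma gradNorm_eq_zero_iff {x : Fin n → ℝ} :
    gradNorm f x = 0 ↔ ∀ i, eval x (pderiv i f) = 0 := by
  rw [gradNorm, Real.sqrt_eq_zero (sum_nonneg fun i _ => sq_nonneg _),
    sum_eq_zero_iff_of_nonneg fun i _ => sq_nonneg _]
  simp

lemma IsWeightedHomog.pow_mul_gradNorm_le (hf : IsWeightedHomog f w d) {t : ℝ} (ht₀ : 0 ≤ t)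
    (ht₁ : t ≤ 1) (x : Fin n → ℝ) : t ^ d * gradNorm f x ≤ gradNorm f (weightedScale w t x) := by
  rw [gradNorm, gradNorm, ← Real.sqrt_sq (pow_nonneg ht₀ d), ← Real.sqrt_mul (sq_nonneg _),
    mul_sum]
  gcongr with i
  rw [← mul_pow, ← hf.pow_mul_eval_weightedScale_pderiv, mul_pow]
  exact mul_le_of_le_one_left (sq_nonneg _) (pow_le_one₀ (by positivity) (pow_le_one₀ ht₀ ht₁))

lemma rho_zero (hw : ∀ i, 0 < w i) : rho w 0 = 0 := by
  simp [rho, Real.zero_rpow, (hw _).ne']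

lemma rho_pos {x : Fin n → ℝ} (hx : x ≠ 0) : 0 < rho w x := by
  obtain ⟨j, hj⟩ := Function.ne_iff.mp hx
  exact Real.sqrt_pos.2 <| (Real.rpow_pos_of_pos (abs_pos.2 hj) _).trans_le <|
    single_le_sum (f := fun i => |x i| ^ ((2 : ℝ) / w i)) (fun i _ => by positivity) (mem_univ j)

lemma continuous_rho : Continuous (rho w) :=
  Real.continuous_sqrt.comp <| continuous_finsetSum _ fun i _ =>
    (continuous_abs.comp (continuous_apply i)).rpow_const fun _ => Or.inr (by positivity)

lemma rho_weightedScale (hw : ∀ i, 0 < w i) {t : ℝ} (ht : 0 ≤ t) (x : Fin n → ℝ) :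
    rho w (weightedScale w t x) = t * rho w x := by
  have hterm (j : Fin n) : |t ^ w j * x j| ^ ((2 : ℝ) / w j) = t ^ 2 * |x j| ^ ((2 : ℝ) / w j) := by
    rw [abs_mul, Real.mul_rpow (by positivity) (abs_nonneg _), abs_of_nonneg (by positivity),
      ← Real.rpow_natCast, ← Real.rpow_mul ht, mul_div_cancel₀ _ (by simp [(hw j).ne']),
      Real.rpow_two]
  simp only [rho, weightedScale, hterm, ← mul_sum]
  rw [Real.sqrt_mul (sq_nonneg t), Real.sqrt_sq ht]

lemma abs_rpow_le_rho_sq (x : Fin n → ℝ) (i : Fin n) :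
    |x i| ^ ((2 : ℝ) / w i) ≤ rho w x ^ 2 := by
  rw [rho, Real.sq_sqrt (sum_nonneg fun j _ => by positivity)]
  exact single_le_sum (f := fun j => |x j| ^ ((2 : ℝ) / w j)) (fun j _ => by positivity)
    (mem_univ i)

lemma eNorm_le_rho (hw : ∀ i, 0 < w i) {x : Fin n → ℝ} (hx : rho w x ≤ 1) :
    eNorm x ≤ rho w x := by
  refine Real.sqrt_le_sqrt (sum_le_sum fun i _ => ?_)
  have hwi : (1 : ℝ) ≤ w i := by exact_mod_cast hw i
  have hxi : |x i| ≤ 1 := by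
    by_contra! h
    have h1 : 1 < |x i| ^ ((2 : ℝ) / w i) := Real.one_lt_rpow h (by positivity)
    have h2 : rho w x ^ 2 ≤ 1 := pow_le_one₀ (Real.sqrt_nonneg _) hx
    linarith [abs_rpow_le_rho_sq (w := w) x i]
  rw [← sq_abs, ← Real.rpow_two]
  exact Real.rpow_le_rpow_of_exponent_ge' (abs_nonneg _) hxi (by positivity)
    (div_le_self zero_le_two hwi)

lemma isCompact_rho_preimage_one (hw : ∀ i, 0 < w i) : IsCompact (rho w ⁻¹' {1}) := by
  refine Metric.isCompact_of_isClosed_isBounded (isClosed_singleton.preimage continuous_rho)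
    ((Metric.isBounded_closedBall (x := 0) (r := 1)).subset fun u (hu : rho w u = 1) => ?_)
  rw [mem_closedBall_zero_iff, pi_norm_le_iff_of_nonneg zero_le_one]
  exact fun i => (abs_le_eNorm u i).trans ((eNorm_le_rho hw hu.le).trans hu.le)

lemma IsWeightedHomog.lojIneq_degree (hf : IsWeightedHomog f w d) (hw : ∀ i, 0 < w i)
    (hnd : Nondeg f) (hd : 0 < d) : LojIneq f d := by
  have hpos : ∀ u ∈ rho w ⁻¹' {1}, 0 < gradNorm f u := fun u (hu : rho w u = 1) => by
    have hu0 : u ≠ 0 := by rintro rfl; simp [rho_zero hw] at hu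
    exact (Real.sqrt_nonneg _).lt_of_ne' fun h =>
      hu0 (hnd.eq_zero_of_forall_eval_pderiv_eq_zero hf hw (gradNorm_eq_zero_iff.1 h))
  obtain ⟨m, hm, hmS⟩ :=
    (isCompact_rho_preimage_one hw).exists_forall_le' (continuous_gradNorm f).continuousOn hpos
  refine ⟨m, hm, {x | rho w x < 1},
    (isOpen_lt continuous_rho continuous_const).mem_nhds (by simp [rho_zero hw]), fun x hx => ?_⟩
  rcases eq_or_ne x 0 with rfl | hx0
  · simp [eNorm, Real.zero_rpow (Nat.cast_ne_zero.2 hd.ne'), gradNorm]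
  set t := rho w x
  have ht : 0 < t := rho_pos hx0
  set u := weightedScale w t⁻¹ x
  have hxu : weightedScale w t u = x := by
    rw [weightedScale_weightedScale, mul_inv_cancel₀ ht.ne', weightedScale_one]
  have hu : rho w u = 1 := by
    rw [rho_weightedScale hw (inv_nonneg.2 ht.le), inv_mul_cancel₀ ht.ne']
  calc m * eNorm x ^ (d : ℝ) ≤ m * t ^ d := by
        rw [Real.rpow_natCast]
        gcongr
        exacts [Real.sqrt_nonneg _, eNorm_le_rho hw (le_of_lt hx)]
    _ ≤ t ^ d * gradNorm f u := by rw [mul_comm]; gcongr; exact hmS u hu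
    _ ≤ gradNorm f x := hxu ▸ hf.pow_mul_gradNorm_le ht.le (le_of_lt hx) u

/-- The exponent comes from `t ^ w i * |a i| ≤ ‖weightedScale w t a‖` when `0 ≤ lam`, and from
`‖weightedScale w t a‖ ≤ t * ‖a‖` when `lam < 0`. -/
lemma eventually_mul_rpow_le_eNorm_weightedScale_rpow (hw : ∀ i, 0 < w i) {a : Fin n → ℝ}
    {i : Fin n} (hai : a i ≠ 0) (lam : ℝ) :
    ∃ K > 0, ∀ᶠ t in 𝓝[>] 0, K * t ^ max (w i * lam) lam ≤ eNorm (weightedScale w t a) ^ lam := by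
  have hlow (t : ℝ) (ht : 0 < t) : t ^ w i * |a i| ≤ eNorm (weightedScale w t a) := by
    simpa [weightedScale, abs_mul, abs_of_pos (pow_pos ht _)] using
      abs_le_eNorm (weightedScale w t a) i
  have hwi : (1 : ℝ) ≤ w i := by exact_mod_cast hw i
  rcases le_or_gt 0 lam with hlam | hlam
  · refine ⟨|a i| ^ lam, by positivity, eventually_mem_nhdsWithin.mono fun t (ht : 0 < t) => ?_⟩
    rw [max_eq_left (le_mul_of_one_le_left hlam hwi)]
    calc |a i| ^ lam * t ^ (w i * lam) = (t ^ w i * |a i|) ^ lam := by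
          rw [Real.mul_rpow (by positivity) (abs_nonneg _), Real.rpow_mul ht.le, Real.rpow_natCast,
            mul_comm]
      _ ≤ _ := Real.rpow_le_rpow (by positivity) (hlow t ht) hlam
  · have ha : 0 < eNorm a := (abs_pos.2 hai).trans_le (abs_le_eNorm a i)
    refine ⟨eNorm a ^ lam, by positivity, ?_⟩
    filter_upwards [Ioo_mem_nhdsGT one_pos] with t ⟨ht, ht1⟩
    rw [max_eq_right (by nlinarith)]
    calc eNorm a ^ lam * t ^ lam = (t * eNorm a) ^ lam := by rw [Real.mul_rpow ht.le ha.le, mul_comm]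
      _ ≤ _ := Real.rpow_le_rpow_of_nonpos (lt_of_lt_of_le (by positivity) (hlow t ht))
          (eNorm_weightedScale_le hw ht.le ht1.le a) hlam.le

lemma IsWeightedHomog.gradNorm_weightedScale (hf : IsWeightedHomog f w d) {a : Fin n → ℝ}
    {i : Fin n} (ha : ∀ j ≠ i, eval a (pderiv j f) = 0) {t : ℝ} (ht : 0 < t) :
    gradNorm f (weightedScale w t a) = |eval a (pderiv i f)| * t ^ ((d : ℝ) - w i) := by
  have hE (j : Fin n) : eval (weightedScale w t a) (pderiv j f) =
      t ^ ((d : ℝ) - w j) * eval a (pderiv j f) := by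
    rw [Real.rpow_sub ht, Real.rpow_natCast, Real.rpow_natCast, div_mul_eq_mul_div,
      eq_div_iff (by positivity), mul_comm, hf.pow_mul_eval_weightedScale_pderiv]
  rw [gradNorm, sum_eq_single i (fun j _ hj => by simp [hE, ha j hj]) (by simp),
    Real.sqrt_sq_eq_abs, hE, abs_mul, abs_of_pos (by positivity), mul_comm]

lemma IsWeightedHomog.not_lojIneq (hf : IsWeightedHomog f w d) (hw : ∀ i, 0 < w i)
    {a : Fin n → ℝ} {i : Fin n} (hai : a i ≠ 0) (ha : ∀ j ≠ i, eval a (pderiv j f) = 0)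
    (hc : eval a (pderiv i f) ≠ 0) {lam : ℝ} (hlam : lam < ((d : ℝ) - w i) / w i) :
    ¬ LojIneq f lam := by
  rintro ⟨C, hC, U, hU, hloj⟩
  have hwi : (1 : ℝ) ≤ w i := by exact_mod_cast hw i
  have hδ : (w i : ℝ) ≤ d := by
    exact_mod_cast hf.le_of_pderiv_ne_zero fun h => hc (by rw [h, map_zero])
  have hexp : max (w i * lam) lam < d - w i := by
    have h1 : w i * lam < d - w i := by
      rwa [lt_div_iff₀ (by positivity), mul_comm] at hlam
    refine max_lt h1 ?_
    rcases le_or_gt 0 lam with h | h <;> nlinarith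
  obtain ⟨K, hK, hKev⟩ := eventually_mul_rpow_le_eNorm_weightedScale_rpow hw hai lam
  refine not_eventually_mul_rpow_le_mul_rpow (mul_pos hC hK) hexp (M := |eval a (pderiv i f)|) ?_
  filter_upwards [hKev, eventually_mem_nhdsWithin,
    ((tendsto_weightedScale_zero hw a).mono_left nhdsWithin_le_nhds).eventually_mem hU]
    with t hKt (ht : 0 < t) htU
  rw [← hf.gradNorm_weightedScale ha ht, mul_assoc]
  exact (mul_le_mul_of_nonneg_left hKt hC.le).trans (hloj _ htU)

end

theorem stmt9_general (d w₁ w₂ : ℕ) (hw₁ : 0 < w₁) (hw₂ : 0 < w₂)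
    (f : MvPolynomial (Fin 2) ℝ)
    (hhom : IsWeightedHomog f ![w₁, w₂] d)
    (hnd : Nondeg f)
    (ha : ∃ a : Fin 2 → ℝ, a 1 ≠ 0 ∧ eval a (pderiv 0 f) = 0) :
    (∀ lam : ℝ, lam < ((d : ℝ) - w₂) / w₂ → ¬ LojIneq f lam) ∧
    (d : ℝ) / w₂ - 1 ≤ lojExp f := by
  obtain ⟨a, ha1, ha0⟩ := ha
  have hw : ∀ i, 0 < ![w₁, w₂] i := Fin.forall_fin_two.2 ⟨hw₁, hw₂⟩
  have hrest : ∀ j ≠ 1, eval a (pderiv j f) = 0 := Fin.forall_fin_two.2 ⟨fun _ => ha0, by simp⟩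
  have hc : eval a (pderiv 1 f) ≠ 0 := fun h =>
    ha1 (by rw [hnd.eq_zero_of_forall_eval_pderiv_eq_zero hhom hw
      (Fin.forall_fin_two.2 ⟨ha0, h⟩)]; rfl)
  have hd : 0 < d :=
    hw₂.trans_le (hhom.le_of_pderiv_ne_zero (i := 1) fun h => hc (by rw [h, map_zero]))
  have hbelow (lam : ℝ) (hlam : lam < ((d : ℝ) - w₂) / w₂) : ¬ LojIneq f lam :=
    hhom.not_lojIneq hw ha1 hrest hc hlam
  refine ⟨hbelow, ?_⟩
  rw [lojExp, show (d : ℝ) / w₂ - 1 = ((d : ℝ) - w₂) / w₂ by field_simp]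
  exact le_csInf ⟨d, by positivity, hhom.lojIneq_degree hw hnd hd⟩
    fun lam ⟨_, hlam⟩ => not_lt.1 fun h => hbelow lam h hlam

theorem stmt9 (d w₁ w₂ : ℕ) (hd : 0 < d) (hw₁ : 0 < w₁) (hw₂ : 0 < w₂)
    (f : MvPolynomial (Fin 2) ℝ)
    (hhom : IsWeightedHomog f ![w₁, w₂] d)
    (hnd : Nondeg f)
    (ha : ∃ a : Fin 2 → ℝ, a 1 ≠ 0 ∧ eval a (pderiv 0 f) = 0) :
    (∀ lam : ℝ, lam < ((d : ℝ) - w₂) / w₂ → ¬ LojIneq f lam) ∧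
    (d : ℝ) / w₂ - 1 ≤ lojExp f :=
  stmt9_general d w₁ w₂ hw₁ hw₂ f hhom hnd ha
end

section
/- The polynomial g(x, y) = y(x⁵ − x y¹² + y¹⁵) (weighted homogeneous of type (16; 3, 1) with an isolated singularity at the origin) has Łojasiewicz exponent L(g) = 15. -/
open MvPolynomial

/-!
`g = y (x⁵ - x y¹² + y¹⁵)` is weighted homogeneous of type `(16; 3, 1)`, so `∂ₓg` and `∂ᵧg` are
weighted homogeneous of degrees `13` and `15`. Writing `p = (t³a, tb)` with `a² + b⁶ = 1`, the
gradient is bounded below on that compact curve (it has no zero there), which gives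
`‖∇g(p)‖ ≥ c t¹⁵ ≥ c' ‖p‖¹⁵`. Conversely, along `x = 5^(-1/4) y³` the derivative `∂ₓg` vanishes
and `‖∇g‖ ≍ y¹⁵ ≍ ‖p‖¹⁵`, so no exponent below `15` works.
-/

open Filter Topology

theorem gradNorm_fin_two (f : MvPolynomial (Fin 2) ℝ) (x : Fin 2 → ℝ) :
    gradNorm f x = √(eval x (pderiv 0 f) ^ 2 + eval x (pderiv 1 f) ^ 2) := by
  rw [gradNorm, Fin.sum_univ_two]

theorem eNorm_fin_two (x : Fin 2 → ℝ) : eNorm x = √(x 0 ^ 2 + x 1 ^ 2) := by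
  rw [eNorm, Fin.sum_univ_two]

theorem LojIneq.le_of_gradNorm_le_along {n : ℕ} {f : MvPolynomial (Fin n) ℝ} {lam μ K : ℝ}
    {γ : ℝ → Fin n → ℝ} (h : LojIneq f lam) (hlam : 0 ≤ lam)
    (hγ : Tendsto γ (𝓝[>] 0) (𝓝 0)) (hγ_norm : ∀ᶠ t in 𝓝[>] 0, t ≤ eNorm (γ t))
    (hgrad : ∀ᶠ t in 𝓝[>] 0, gradNorm f (γ t) ≤ K * t ^ μ) : μ ≤ lam := by
  by_contra! hlt
  obtain ⟨C, hC, U, hU, hineq⟩ := h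
  have hbound : ∀ᶠ t in 𝓝[>] 0, C ≤ K * t ^ (μ - lam) := by
    filter_upwards [hγ hU, hγ_norm, hgrad, self_mem_nhdsWithin]
      with t hγU hnorm hgradt (ht : 0 < t)
    refine le_of_mul_le_mul_right ?_ (Real.rpow_pos_of_pos ht lam)
    calc C * t ^ lam ≤ C * eNorm (γ t) ^ lam := by gcongr
      _ ≤ gradNorm f (γ t) := hineq _ hγU
      _ ≤ K * t ^ μ := hgradt
      _ = K * t ^ (μ - lam) * t ^ lam := by
        rw [mul_assoc, ← Real.rpow_add ht, sub_add_cancel]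
  have hsmall : Tendsto (fun t : ℝ => K * t ^ (μ - lam)) (𝓝[>] 0) (𝓝 0) := by
    have hcont := Real.continuousAt_rpow_const 0 (μ - lam) (Or.inr (sub_pos.2 hlt).le)
    simpa [Real.zero_rpow (sub_pos.2 hlt).ne'] using
      (hcont.tendsto.const_mul K).mono_left nhdsWithin_le_nhds
  obtain ⟨t, hCt, htC⟩ := (hbound.and (hsmall.eventually (gt_mem_nhds hC))).exists
  linarith

theorem exists_weighted_polar {k : ℕ} (hk : 0 < k) (x y : ℝ) :
    ∃ t a b : ℝ, 0 ≤ t ∧ t ^ (2 * k) = x ^ 2 + y ^ (2 * k) ∧ a ^ 2 + b ^ (2 * k) = 1 ∧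
      x = t ^ k * a ∧ y = t * b := by
  have hy2k : y ^ (2 * k) = (y ^ k) ^ 2 := pow_mul' y 2 k
  have hs : 0 ≤ x ^ 2 + y ^ (2 * k) := by rw [hy2k]; positivity
  rcases hs.eq_or_lt with hs0 | hs_pos
  · have hx : x = 0 := by nlinarith [sq_nonneg (y ^ k)]
    have hy : y = 0 := pow_eq_zero_iff hk.ne' |>.1 (by nlinarith [sq_nonneg x])
    exact ⟨0, 1, 0, le_rfl, by simp [hk.ne', ← hs0], by simp [hk.ne'], by simp [hx, hk.ne'],
      by simp [hy]⟩
  · set t := (x ^ 2 + y ^ (2 * k)) ^ ((2 * k : ℝ)⁻¹)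
    have ht : 0 < t := by positivity
    have ht2k : t ^ (2 * k) = x ^ 2 + y ^ (2 * k) := by
      rw [← Real.rpow_natCast, ← Real.rpow_mul hs, Nat.cast_mul, Nat.cast_ofNat,
        inv_mul_cancel₀ (by positivity), Real.rpow_one]
    refine ⟨t, x / t ^ k, y / t, ht.le, ht2k, ?_, by field_simp, by field_simp⟩
    rw [div_pow, div_pow, ← pow_mul, mul_comm k 2, ← add_div, ht2k, div_self hs_pos.ne']

theorem isCompact_weightedSphere {k : ℕ} (hk : 0 < k) :
    IsCompact {q : ℝ × ℝ | q.1 ^ 2 + q.2 ^ (2 * k) = 1} := by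
  have hbox : IsCompact (Set.Icc (-1 : ℝ) 1 ×ˢ Set.Icc (-1 : ℝ) 1) :=
    isCompact_Icc.prod isCompact_Icc
  refine hbox.of_isClosed_subset (isClosed_eq (by fun_prop) continuous_const)
    fun q (hq : _ = _) => ?_
  rw [pow_mul] at hq
  have h1 : q.1 ^ 2 ≤ 1 := by nlinarith [pow_nonneg (sq_nonneg q.2) k]
  have h2 : q.2 ^ 2 ≤ 1 :=
    (pow_le_one_iff_of_nonneg (sq_nonneg _) hk.ne').1 (by nlinarith [sq_nonneg q.1])
  exact ⟨abs_le.1 ((sq_le_one_iff_abs_le_one _).1 h1), abs_le.1 ((sq_le_one_iff_abs_le_one _).1 h2)⟩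

namespace LojasiewiczExample

noncomputable def g : MvPolynomial (Fin 2) ℝ :=
  X 1 * ((X 0) ^ 5 - X 0 * (X 1) ^ 12 + (X 1) ^ 15)

def gx (x y : ℝ) : ℝ := y * (5 * x ^ 4 - y ^ 12)

def gy (x y : ℝ) : ℝ := x ^ 5 - 13 * x * y ^ 12 + 16 * y ^ 15

theorem gradNorm_g (p : Fin 2 → ℝ) :
    gradNorm g p = √(gx (p 0) (p 1) ^ 2 + gy (p 0) (p 1) ^ 2) := by
  rw [gradNorm_fin_two]
  congr 3 <;> simp [g, gx, gy, pderiv_X]; ring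

theorem gx_dilate (t a b : ℝ) : gx (t ^ 3 * a) (t * b) = t ^ 13 * gx a b := by
  unfold gx; ring

theorem gy_dilate (t a b : ℝ) : gy (t ^ 3 * a) (t * b) = t ^ 15 * gy a b := by
  unfold gy; ring

theorem eq_zero_of_gx_eq_zero_of_gy_eq_zero {a b : ℝ} (hx : gx a b = 0) (hy : gy a b = 0) :
    a = 0 ∧ b = 0 := by
  unfold gx at hx
  unfold gy at hy
  rcases eq_or_ne b 0 with rfl | hb
  · exact ⟨pow_eq_zero_iff (n := 5) (by norm_num) |>.1 (by simpa using hy), rfl⟩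
  have h5 : 5 * a ^ 4 = b ^ 12 := by linarith [(mul_eq_zero.1 hx).resolve_left hb]
  have ha : a = 5 * b ^ 3 / 4 := by
    have : b ^ 12 * (80 * b ^ 3 - 64 * a) = 0 := by linear_combination 5 * hy - a * h5
    linarith [(mul_eq_zero.1 this).resolve_left (pow_ne_zero _ hb)]
  subst ha
  have : b ^ 12 = 0 := by linear_combination (256 / 2869) * h5
  exact absurd (pow_eq_zero_iff (by norm_num) |>.1 this) hb

theorem exists_pos_le_gx_sq_add_gy_sq :
    ∃ m > 0, ∀ a b : ℝ, a ^ 2 + b ^ 6 = 1 → m ≤ gx a b ^ 2 + gy a b ^ 2 := by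
  have hpos : ∀ q ∈ {q : ℝ × ℝ | q.1 ^ 2 + q.2 ^ (2 * 3) = 1},
      0 < gx q.1 q.2 ^ 2 + gy q.1 q.2 ^ 2 := by
    rintro ⟨a, b⟩ (hab : _ = _)
    refine (by positivity : (0 : ℝ) ≤ _).lt_of_ne fun h => ?_
    obtain ⟨hgx, hgy⟩ := (add_eq_zero_iff_of_nonneg (sq_nonneg _) (sq_nonneg _)).1 h.symm
    obtain ⟨rfl, rfl⟩ := eq_zero_of_gx_eq_zero_of_gy_eq_zero (pow_eq_zero_iff two_ne_zero |>.1 hgx)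
      (pow_eq_zero_iff two_ne_zero |>.1 hgy)
    norm_num at hab
  obtain ⟨m, hm, hmin⟩ := (isCompact_weightedSphere (k := 3) (by norm_num)).exists_forall_le'
    (by unfold gx gy; fun_prop) hpos
  exact ⟨m, hm, fun a b hab => hmin (a, b) hab⟩

theorem lojIneq_g_fifteen : LojIneq g 15 := by
  obtain ⟨m, hm, hmin⟩ := exists_pos_le_gx_sq_add_gy_sq
  refine ⟨√m / 2 ^ 15, by positivity, {p | p 0 ^ 2 + p 1 ^ 6 < 1},
    (isOpen_lt (by fun_prop) continuous_const).mem_nhds (by simp), fun p hp => ?_⟩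
  obtain ⟨t, a, b, ht0, ht6, hab, hx, hy⟩ :=
    exists_weighted_polar (k := 3) (by norm_num) (p 0) (p 1)
  replace hp : p 0 ^ 2 + p 1 ^ 6 < 1 := hp
  norm_num at ht6 hab
  have ht1 : t ≤ 1 := (pow_le_one_iff_of_nonneg ht0 (by norm_num : 6 ≠ 0)).1 (by linarith)
  have hnorm : eNorm p ≤ 2 * t := by
    have ha : a ^ 2 ≤ 1 := by nlinarith [pow_two_nonneg (b ^ 3)]
    have hb : b ^ 2 ≤ 1 :=
      (pow_le_one_iff_of_nonneg (sq_nonneg b) (by norm_num : 3 ≠ 0)).1 (by nlinarith [sq_nonneg a])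
    have ht3 : t ^ 3 ≤ t := by nlinarith [pow_le_one₀ (n := 2) ht0 ht1]
    rw [eNorm_fin_two, hx, hy]
    refine Real.sqrt_le_iff.2 ⟨by positivity, ?_⟩
    nlinarith [mul_le_mul ht3 ht3 (by positivity) ht0]
  have hgrad : t ^ 15 * √m ≤ gradNorm g p := by
    rw [gradNorm_g, hx, hy, gx_dilate, gy_dilate]
    have ht : (t ^ 15) ^ 2 ≤ (t ^ 13) ^ 2 :=
      pow_le_pow_left₀ (by positivity) (pow_le_pow_of_le_one ht0 ht1 (by norm_num)) 2
    have hsq : (t ^ 15) ^ 2 * m ≤ (t ^ 13 * gx a b) ^ 2 + (t ^ 15 * gy a b) ^ 2 := by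
      rw [mul_pow, mul_pow]
      nlinarith [hmin a b hab, mul_le_mul_of_nonneg_right ht (sq_nonneg (gx a b)),
        pow_two_nonneg (t ^ 15)]
    calc t ^ 15 * √m = √((t ^ 15) ^ 2 * m) := by
          rw [Real.sqrt_mul (by positivity), Real.sqrt_sq (by positivity)]
      _ ≤ _ := Real.sqrt_le_sqrt hsq
  calc √m / 2 ^ 15 * eNorm p ^ (15 : ℝ) ≤ √m / 2 ^ 15 * (2 * t) ^ 15 := by
        rw [Real.rpow_ofNat]; gcongr; exact Real.sqrt_nonneg _
    _ = t ^ 15 * √m := by ring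
    _ ≤ _ := hgrad

theorem fifteen_le_of_lojIneq_g {lam : ℝ} (hlam : 0 ≤ lam) (h : LojIneq g lam) : 15 ≤ lam := by
  set c : ℝ := (1 / 5) ^ (4 : ℝ)⁻¹
  have hc4 : 5 * c ^ 4 = 1 := by
    rw [← Real.rpow_natCast, ← Real.rpow_mul (by norm_num)]; norm_num
  let γ : ℝ → Fin 2 → ℝ := fun t => ![t ^ 3 * c, t]
  refine h.le_of_gradNorm_le_along hlam (γ := γ) (K := |gy c 1|) ?_ ?_ ?_
  · exact ((by fun_prop : Continuous γ).tendsto' 0 0 (by simp [γ])).mono_left nhdsWithin_le_nhds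
  · filter_upwards [self_mem_nhdsWithin] with t (ht : 0 < t)
    rw [eNorm_fin_two]
    exact Real.le_sqrt_of_sq_le (by simp [γ]; positivity)
  · filter_upwards [self_mem_nhdsWithin] with t (ht : 0 < t)
    have hgx : gx (t ^ 3 * c) t = 0 := by unfold gx; linear_combination t ^ 13 * hc4
    have hgy : gy (t ^ 3 * c) t = t ^ 15 * gy c 1 := by unfold gy; ring
    simp only [gradNorm_g, γ, Matrix.cons_val_zero, Matrix.cons_val_one, hgx, hgy]
    rw [Real.rpow_ofNat, zero_pow two_ne_zero, zero_add, Real.sqrt_sq_eq_abs, abs_mul,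
      abs_of_pos (by positivity), mul_comm]

end LojasiewiczExample

theorem stmt16 :
    lojExp (X 1 * ((X 0) ^ 5 - X 0 * (X 1) ^ 12 + (X 1) ^ 15) : MvPolynomial (Fin 2) ℝ) = 15 :=
  IsLeast.csInf_eq ⟨⟨by norm_num, LojasiewiczExample.lojIneq_g_fifteen⟩,
    fun _ hlam => LojasiewiczExample.fifteen_le_of_lojIneq_g hlam.1.le hlam.2⟩
end
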